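/- arXiv:1101.3431 — 2 statements merged into one kernel-verified Lean document; each statement's English description precedes it below -/
import Mathlib

section
/- Let (a,b) and (χ,κ) be pairs of reals with |b| ≤ 2M and |κ| ≤ 2M, let δ > 0 satisfy: either a = χ or |a - χ| ≥ δ, and let 0 < ε < δ/(4M) with M > 0. Then a + εb ≤ χ + εκ implies (a,b) ≤_lex (χ,κ), and conversely (a,b) ≤_lex (χ,κ) implies a + εb ≤ χ + εκ. -/
/-!
The perturbations `ε * b` and `ε * κ` differ by at most `4 * M * ε < δ`, so they cannot
bridge a gap `a ≠ χ` of size at least `δ`; only when `a = χ` do they decide the comparison.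
-/

section LinearOrderedAddCommGroup

variable {α : Type*} [AddCommGroup α] [LinearOrder α] [IsOrderedAddMonoid α]

theorem add_le_add_iff_lex_of_abs_sub_lt {a χ p q δ : α} (hpq : |q - p| < δ)
    (hsep : a = χ ∨ δ ≤ |a - χ|) : a + p ≤ χ + q ↔ a < χ ∨ a = χ ∧ p ≤ q := by
  have hqp : q - p < δ := (le_abs_self _).trans_lt hpq
  have hpq' : p - q < δ := (le_abs_self _).trans_lt (by rwa [abs_sub_comm])
  rcases hsep with rfl | hgap
  · simp
  rcases lt_trichotomy a χ with hlt | rfl | hgt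
  · rw [abs_sub_comm, abs_of_pos (sub_pos.mpr hlt)] at hgap
    simp only [hlt, true_or, iff_true]
    calc a + p = a + (p - q) + q := by abel
      _ ≤ a + (χ - a) + q := by gcongr a + ?_ + q; exact (hpq'.trans_le hgap).le
      _ = χ + q := by abel
  · rw [sub_self, abs_zero] at hgap
    exact absurd ((abs_nonneg _).trans_lt hpq) hgap.not_gt
  · rw [abs_of_pos (sub_pos.mpr hgt)] at hgap
    simp only [hgt.not_gt, hgt.ne', false_and, or_self, iff_false, not_le]
    calc χ + q = χ + (q - p) + p := by abel
      _ < χ + (a - χ) + p := by gcongr χ + ?_ + p; exact hqp.trans_le hgap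
      _ = a + p := by abel

end LinearOrderedAddCommGroup

theorem perturbed_vs_lex_general (a b χ κ M δ ε : ℝ)
    (hb : |b| ≤ 2 * M) (hκ : |κ| ≤ 2 * M)
    (hsep : a = χ ∨ δ ≤ |a - χ|) (hM : 0 < M)
    (hε0 : 0 < ε) (hε : ε < δ / (4 * M)) :
    a + ε * b ≤ χ + ε * κ ↔ (a < χ ∨ (a = χ ∧ b ≤ κ)) := by
  have hperturb : |ε * κ - ε * b| < δ :=
    calc |ε * κ - ε * b| = ε * |κ - b| := by rw [← mul_sub, abs_mul, abs_of_pos hε0]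
      _ ≤ ε * (4 * M) := by gcongr; linarith [abs_sub κ b]
      _ < δ := (lt_div_iff₀ (by positivity)).mp hε
  rw [add_le_add_iff_lex_of_abs_sub_lt hperturb hsep, mul_le_mul_iff_right₀ hε0]

/-- Key estimate relating ε-perturbed values to the lexicographic order on germs:
for `0 < ε < δ/(4M)`, `a + εb ≤ χ + εκ` iff `(a,b) ≤_lex (χ,κ)`. -/
theorem perturbed_vs_lex (a b χ κ M δ ε : ℝ)
    (hb : |b| ≤ 2 * M) (hκ : |κ| ≤ 2 * M) (hδ : 0 < δ)
    (hsep : a = χ ∨ δ ≤ |a - χ|) (hM : 0 < M)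
    (hε0 : 0 < ε) (hε : ε < δ / (4 * M)) :
    a + ε * b ≤ χ + ε * κ ↔ (a < χ ∨ (a = χ ∧ b ≤ κ)) :=
  perturbed_vs_lex_general a b χ κ M δ ε hb hκ hsep hM hε0 hε
end

section
/- Let f : R^n → R^n be sup-norm nonexpansive and suppose there exist vectors v, χ ∈ R^n and T ∈ R such that f(v + tχ) = v + (t+1)χ for all t ≥ T (an invariant half-line). Then for every x ∈ R^n, the limit of f^k(x)/k as k → ∞ exists and equals χ. -/
open Filter

/-- If a sup-norm nonexpansive map `f : ℝⁿ → ℝⁿ` has an invariant half-line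
`t ↦ v + tχ` (for `t ≥ T`), then `f^k(x)/k → χ` for every `x`. -/
theorem invariant_halfline_cycle_time (n : ℕ) (f : (Fin n → ℝ) → Fin n → ℝ)
    (hne : ∀ x y : Fin n → ℝ, dist (f x) (f y) ≤ dist x y)
    (v χ : Fin n → ℝ) (T : ℝ)
    (hinv : ∀ t : ℝ, T ≤ t →
      f (fun i => v i + t * χ i) = fun i => v i + (t + 1) * χ i) :
    ∀ x : Fin n → ℝ, ∀ i : Fin n,
      Tendsto (fun k : ℕ => (f^[k] x) i / (k : ℝ)) atTop (nhds (χ i)) := by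
  intro x i
  set y : Fin n → ℝ := fun i => v i + T * χ i with hy
  have hiter : ∀ k : ℕ, f^[k] y = fun i => v i + (T + k) * χ i := by
    intro k
    induction k with
    | zero => simp [hy]
    | succ k ih =>
      rw [Function.iterate_succ_apply', ih, hinv (T + k) (by simp)]
      funext j
      push_cast
      ring_nf
  have hdist : ∀ k : ℕ, dist (f^[k] x) (f^[k] y) ≤ dist x y := by
    intro k
    induction k with
    | zero => simp
    | succ k ih =>
      rw [Function.iterate_succ_apply', Function.iterate_succ_apply']
      exact (hne _ _).trans ih
  set C : ℝ := dist x y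
  have hbound : ∀ k : ℕ, |f^[k] x i - (v i + (T + k) * χ i)| ≤ C := by
    intro k
    have h1 : dist (f^[k] x i) (f^[k] y i) ≤ dist (f^[k] x) (f^[k] y) :=
      dist_le_pi_dist _ _ i
    have h2 := (h1.trans (hdist k))
    rw [hiter k] at h2
    rwa [Real.dist_eq] at h2
  have hz : Tendsto (fun k : ℕ =>
      (f^[k] x i - (v i + (T + k) * χ i) + (v i + T * χ i)) / (k : ℝ))
      atTop (nhds 0) := by
    refine squeeze_zero_norm' ?_
      (tendsto_const_div_atTop_nhds_zero_nat (C + |v i + T * χ i|))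
    filter_upwards [eventually_ge_atTop 1] with k hk
    have hk' : (0:ℝ) < k := by exact_mod_cast hk
    rw [Real.norm_eq_abs, abs_div, abs_of_pos hk']
    exact div_le_div_of_nonneg_right
      ((abs_add_le _ _).trans (add_le_add (hbound k) le_rfl)) hk'.le
  have key : Tendsto (fun k : ℕ =>
      (f^[k] x i - (v i + (T + k) * χ i) + (v i + T * χ i)) / (k : ℝ) + χ i)
      atTop (nhds (χ i)) := by
    simpa using hz.add tendsto_const_nhds
  apply key.congr'
  filter_upwards [eventually_ge_atTop 1] with k hk
  have hk' : (k : ℝ) ≠ 0 := by positivity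
  field_simp
  ring
end
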